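/- Let 0 < |λ| < 1 and consider the vector field F₈(x,y,z) = (λz² − (λ+1)yz, λxy + (1−λ)xz, xz) on ℝ³. On the half-space H⁺ = {z > 0}, the function f(x,y,z) = (y−z)·z^{−λ} is a first integral: along any solution with z(t) > 0, d/dt [(y(t)−z(t))·z(t)^{−λ}] = 0. -/

import Mathlib

/-- The geodesic field `F₈` of `Q₈` on `h(λ)`: `(λz² − (λ+1)yz, λxy + (1−λ)xz, xz)`. -/
def F8h (l : ℝ) (v : Fin 3 → ℝ) : Fin 3 → ℝ :=
  ![l * (v 2) ^ 2 - (l + 1) * v 1 * v 2, l * v 0 * v 1 + (1 - l) * v 0 * v 2, v 0 * v 2]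

/-!
Along the flow of `F₈`, `z' = x z` and `(y − z)' = λ x (y − z)`, so `y − z` and `z ^ λ` have the
same logarithmic derivative `λ x`, and their quotient `(y − z) z ^ (−λ)` is stationary.
-/

theorem hasDerivAt_mul_rpow_neg_eq_zero {w z : ℝ → ℝ} {a c t : ℝ} (hz : 0 < z t)
    (hw : HasDerivAt w (a * c * w t) t) (hzd : HasDerivAt z (c * z t) t) :
    HasDerivAt (fun u => w u * z u ^ (-a)) 0 t := by
  have hpow := hzd.rpow_const (p := -a) (Or.inl hz.ne')
  refine (hw.mul hpow).congr_deriv ?_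
  rw [Real.rpow_sub_one hz.ne']
  field_simp
  ring

theorem F8h_one_sub_F8h_two (l : ℝ) (v : Fin 3 → ℝ) :
    F8h l v 1 - F8h l v 2 = l * v 0 * (v 1 - v 2) := by
  simp only [F8h, Matrix.cons_val]
  ring

theorem stmt_11_general (l : ℝ) (γ : ℝ → Fin 3 → ℝ) (t : ℝ)
    (hz : 0 < γ t 2) (hγ : HasDerivAt γ (F8h l (γ t)) t) :
    HasDerivAt (fun u => (γ u 1 - γ u 2) * (γ u 2) ^ (-l : ℝ)) 0 t := by
  have hcoord (i : Fin 3) : HasDerivAt (fun u => γ u i) (F8h l (γ t) i) t :=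
    hasDerivAt_pi.1 hγ i
  have hw : HasDerivAt (fun u => γ u 1 - γ u 2) (l * γ t 0 * (γ t 1 - γ t 2)) t :=
    F8h_one_sub_F8h_two l (γ t) ▸ (hcoord 1).sub (hcoord 2)
  exact hasDerivAt_mul_rpow_neg_eq_zero hz hw (hcoord 2)

/-- For `0 < |λ| < 1`, on `{z > 0}` the function `f = (y−z)·z^{−λ}` is a
first integral of `F₈`: its derivative along any solution with `z > 0` vanishes. -/
theorem stmt_11 (l : ℝ) (h1 : 0 < |l|) (h2 : |l| < 1) (γ : ℝ → Fin 3 → ℝ) (t : ℝ)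
    (hz : 0 < γ t 2) (hγ : HasDerivAt γ (F8h l (γ t)) t) :
    HasDerivAt (fun u => (γ u 1 - γ u 2) * (γ u 2) ^ (-l : ℝ)) 0 t :=
  stmt_11_general l γ t hz hγ
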